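/- For every positive semidefinite d×d matrix ρ with tr(ρ) = 1: if h(ρ) = 0, then there exist a positive semidefinite d×d matrix σ with tr(σ) = 1 and supp(σ) ⊆ H_R(ρ), and a schedule s, such that t_s(σ) = 0. -/

import Mathlib

/-!
The map `(σ, s) ↦ t_s(σ)` is lower semicontinuous on positive semidefinite `σ` and schedules
`s ∈ Fin m ^ ℕ`: it is the supremum of the finite-horizon probabilities `tWord (s(≤N)) σ`,
each continuous because it depends on finitely many letters of `s`. The density matrices
supported in `H_R(ρ)` form a compact set, and so do schedules (Tychonoff), so `t_s(σ)` attains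
its infimum `h(ρ) = 0` on pairs `(σ, s)`.
-/

noncomputable section
open Matrix
open scoped ComplexOrder

variable {d m r : ℕ}

/-- One step of process `i`: `T_i(ρ) = E_i(M₁ ρ M₁†) = ∑_j (E_{i,j} M₁) ρ (E_{i,j} M₁)†`. -/
def Tstep (E : Fin m → Fin r → Matrix (Fin d) (Fin d) ℂ)
    (M1 : Matrix (Fin d) (Fin d) ℂ) (i : Fin m)
    (ρ : Matrix (Fin d) (Fin d) ℂ) : Matrix (Fin d) (Fin d) ℂ :=
  ∑ j, (E i j * M1) * ρ * (E i j * M1)ᴴ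

/-- `T_f` for a word `f = s₁⋯s_n`: apply `T_{s₁}` first, then `T_{s₂}`, …, `T_{s_n}`. -/
def Tword (E : Fin m → Fin r → Matrix (Fin d) (Fin d) ℂ)
    (M1 : Matrix (Fin d) (Fin d) ℂ) (f : List (Fin m))
    (ρ : Matrix (Fin d) (Fin d) ℂ) : Matrix (Fin d) (Fin d) ℂ :=
  f.foldl (fun σ k => Tstep E M1 k σ) ρ

/-- The support of a matrix: its column space, as a subspace of `ℂ^d`. -/
def supp (A : Matrix (Fin d) (Fin d) ℂ) : Submodule ℂ (Fin d → ℂ) :=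
  LinearMap.range (Matrix.toLin' A)

/-- Length-`n` prefix of a schedule. -/
def prefixn (s : ℕ → Fin m) (n : ℕ) : List (Fin m) :=
  List.ofFn (fun i : Fin n => s i)

/-- Termination probability within a word `f`. -/
def tWord (E : Fin m → Fin r → Matrix (Fin d) (Fin d) ℂ)
    (M0 M1 : Matrix (Fin d) (Fin d) ℂ) (f : List (Fin m))
    (ρ : Matrix (Fin d) (Fin d) ℂ) : ℝ :=
  ∑ n ∈ Finset.range (f.length + 1),
    (M0 * Tword E M1 (f.take n) ρ * M0ᴴ).trace.re

/-- Termination probability along a schedule `s`. -/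
def tSched (E : Fin m → Fin r → Matrix (Fin d) (Fin d) ℂ)
    (M0 M1 : Matrix (Fin d) (Fin d) ℂ) (s : ℕ → Fin m)
    (ρ : Matrix (Fin d) (Fin d) ℂ) : ℝ :=
  ∑' n : ℕ, (M0 * Tword E M1 (prefixn s n) ρ * M0ᴴ).trace.re

/-- Termination probability `t(ρ)`: infimum over all schedules. -/
def tInf (E : Fin m → Fin r → Matrix (Fin d) (Fin d) ℂ)
    (M0 M1 : Matrix (Fin d) (Fin d) ℂ)
    (ρ : Matrix (Fin d) (Fin d) ℂ) : ℝ :=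
  ⨅ s : ℕ → Fin m, tSched E M0 M1 s ρ

/-- The reachable space `H_{R(ρ)}`. -/
def HR (E : Fin m → Fin r → Matrix (Fin d) (Fin d) ℂ)
    (M1 : Matrix (Fin d) (Fin d) ℂ)
    (ρ : Matrix (Fin d) (Fin d) ℂ) : Submodule ℂ (Fin d → ℂ) :=
  ⨆ f : List (Fin m), supp (Tword E M1 f ρ)

/-- The average super-operator `T = (1/m) ∑ T_i`. -/
def Tavg (E : Fin m → Fin r → Matrix (Fin d) (Fin d) ℂ)
    (M1 : Matrix (Fin d) (Fin d) ℂ)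
    (ρ : Matrix (Fin d) (Fin d) ℂ) : Matrix (Fin d) (Fin d) ℂ :=
  ((m : ℂ)⁻¹) • ∑ i : Fin m, Tstep E M1 i ρ

/-- `H_{R̄_n(ρ)} = ⋁_{k=0}^n supp(T^k(ρ))`. -/
def HRbar (E : Fin m → Fin r → Matrix (Fin d) (Fin d) ℂ)
    (M1 : Matrix (Fin d) (Fin d) ℂ)
    (ρ : Matrix (Fin d) (Fin d) ℂ) (n : ℕ) : Submodule ℂ (Fin d → ℂ) :=
  ⨆ k : Fin (n + 1), supp ((Tavg E M1)^[k] ρ)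

/-- Reachable termination probability `h(ρ)`. -/
def hProb (E : Fin m → Fin r → Matrix (Fin d) (Fin d) ℂ)
    (M0 M1 : Matrix (Fin d) (Fin d) ℂ)
    (ρ : Matrix (Fin d) (Fin d) ℂ) : ℝ :=
  sInf { x : ℝ | ∃ σ : Matrix (Fin d) (Fin d) ℂ,
    σ.PosSemidef ∧ σ.trace = 1 ∧ supp σ ≤ HR E M1 ρ ∧ x = tInf E M0 M1 σ }

/-- `PD_f`: pure states diverging within the word `f`. -/
def PDword (E : Fin m → Fin r → Matrix (Fin d) (Fin d) ℂ)
    (M0 M1 : Matrix (Fin d) (Fin d) ℂ) (f : List (Fin m)) : Set (Fin d → ℂ) :=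
  { x : Fin d → ℂ | tWord E M0 M1 f (Matrix.vecMulVec x (star x)) = 0 }

/-- `PD_n`: union of `PD_f` over words of length `n`. -/
def PDn (E : Fin m → Fin r → Matrix (Fin d) (Fin d) ℂ)
    (M0 M1 : Matrix (Fin d) (Fin d) ℂ) (n : ℕ) : Set (Fin d → ℂ) :=
  { x : Fin d → ℂ | ∃ f : List (Fin m), f.length = n ∧ x ∈ PDword E M0 M1 f }

/-- `PD`: the diverging pure states. -/
def PD (E : Fin m → Fin r → Matrix (Fin d) (Fin d) ℂ)
    (M0 M1 : Matrix (Fin d) (Fin d) ℂ) : Set (Fin d → ℂ) :=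
  { x : Fin d → ℂ | ∃ s : ℕ → Fin m, tSched E M0 M1 s (Matrix.vecMulVec x (star x)) = 0 }

open Finset Filter

namespace Matrix

variable {n : Type*} [Fintype n]

theorem isClosed_setOf_posSemidef : IsClosed {A : Matrix n n ℂ | A.PosSemidef} := by
  classical
  open scoped MatrixOrder Matrix.Norms.L2Operator in
  simpa only [nonneg_iff_posSemidef] using CStarAlgebra.isClosed_nonneg (A := Matrix n n ℂ)

theorem PosSemidef.re_trace_nonneg {A : Matrix n n ℂ} (hA : A.PosSemidef) : 0 ≤ A.trace.re :=
  (Complex.nonneg_iff.mp hA.trace_nonneg).1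

theorem PosSemidef.norm_apply_le_re_trace {A : Matrix n n ℂ} (hA : A.PosSemidef) (i j : n) :
    ‖A i j‖ ≤ A.trace.re := by
  classical
  obtain ⟨B, rfl⟩ : ∃ B : Matrix n n ℂ, A = Bᴴ * B := by
    open scoped MatrixOrder Matrix.Norms.L2Operator in
    exact CStarAlgebra.nonneg_iff_eq_star_mul_self.mp hA.nonneg
  set D : n → ℝ := fun i => ∑ k, ‖B k i‖ ^ 2
  have hD : ∀ i, D i ≤ (Bᴴ * B).trace.re := by
    intro i
    have hdiag : ∀ k, D k = ((Bᴴ * B) k k).re := fun k => by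
      simp [D, mul_apply, Complex.conj_mul', Complex.re_sum, ← Complex.ofReal_pow]
    rw [hdiag, trace, Complex.re_sum]
    exact single_le_sum (f := fun k => ((Bᴴ * B) k k).re)
      (fun k _ => by rw [← hdiag]; positivity) (mem_univ i)
  calc ‖(Bᴴ * B) i j‖ ≤ ∑ k, ‖B k i‖ * ‖B k j‖ := by
        simpa [mul_apply] using norm_sum_le univ fun k => star (B k i) * B k j
    _ ≤ ∑ k, (‖B k i‖ ^ 2 + ‖B k j‖ ^ 2) / 2 :=
        sum_le_sum fun k _ => by nlinarith [sq_nonneg (‖B k i‖ - ‖B k j‖)]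
    _ = (D i + D j) / 2 := by rw [← sum_div, sum_add_distrib]
    _ ≤ (Bᴴ * B).trace.re := by linarith [hD i, hD j]

end Matrix

/-- The probability of terminating right after running the word `f`: the summand of `tWord`
and `tSched`. -/
def tAt (E : Fin m → Fin r → Matrix (Fin d) (Fin d) ℂ) (M0 M1 : Matrix (Fin d) (Fin d) ℂ)
    (f : List (Fin m)) (σ : Matrix (Fin d) (Fin d) ℂ) : ℝ :=
  (M0 * Tword E M1 f σ * M0ᴴ).trace.re

def densityMatricesSupportedIn (V : Submodule ℂ (Fin d → ℂ)) : Set (Matrix (Fin d) (Fin d) ℂ) :=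
  {σ | σ.PosSemidef ∧ σ.trace = 1 ∧ supp σ ≤ V}

theorem isClosed_setOf_supp_le (V : Submodule ℂ (Fin d → ℂ)) :
    IsClosed {σ : Matrix (Fin d) (Fin d) ℂ | supp σ ≤ V} := by
  have hV : IsClosed (V : Set (Fin d → ℂ)) := V.closed_of_finiteDimensional
  convert isClosed_iInter fun x : Fin d → ℂ =>
    hV.preimage (continuous_id.matrix_mulVec (continuous_const (y := x)))
  ext σ
  simp [supp, LinearMap.range_le_iff_comap, Submodule.eq_top_iff']

theorem isCompact_densityMatricesSupportedIn (V : Submodule ℂ (Fin d → ℂ)) :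
    IsCompact (densityMatricesSupportedIn V) := by
  have hbox : IsCompact (Set.univ.pi fun _ => Set.univ.pi fun _ => Metric.closedBall 0 1 :
      Set (Matrix (Fin d) (Fin d) ℂ)) :=
    isCompact_univ_pi fun _ => isCompact_univ_pi fun _ => isCompact_closedBall 0 1
  refine hbox.of_isClosed_subset (isClosed_setOf_posSemidef.inter
    ((isClosed_eq continuous_id.matrix_trace continuous_const).inter
      (isClosed_setOf_supp_le V))) ?_
  rintro σ ⟨hσ, htr, -⟩ i - j -
  simpa [htr] using hσ.norm_apply_le_re_trace i j

section Schedules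

variable {E : Fin m → Fin r → Matrix (Fin d) (Fin d) ℂ} {M0 M1 : Matrix (Fin d) (Fin d) ℂ}

theorem Tword_append (f g : List (Fin m)) (σ : Matrix (Fin d) (Fin d) ℂ) :
    Tword E M1 (f ++ g) σ = Tword E M1 g (Tword E M1 f σ) :=
  List.foldl_append

theorem prefixn_succ (s : ℕ → Fin m) (n : ℕ) : prefixn s (n + 1) = prefixn s n ++ [s n] := by
  simp only [prefixn, List.ofFn_succ', List.concat_eq_append, Fin.val_castSucc, Fin.val_last]

@[simp]
theorem length_prefixn (s : ℕ → Fin m) (n : ℕ) : (prefixn s n).length = n :=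
  List.length_ofFn

theorem Tword_prefixn_succ (s : ℕ → Fin m) (σ : Matrix (Fin d) (Fin d) ℂ) (n : ℕ) :
    Tword E M1 (prefixn s (n + 1)) σ = Tstep E M1 (s n) (Tword E M1 (prefixn s n) σ) := by
  rw [prefixn_succ, Tword_append]
  rfl

theorem prefixn_take (s : ℕ → Fin m) {n N : ℕ} (h : n ≤ N) :
    (prefixn s N).take n = prefixn s n := by
  apply List.ext_getElem <;> simp [prefixn, h]

theorem Matrix.PosSemidef.Tstep {σ : Matrix (Fin d) (Fin d) ℂ} (hσ : σ.PosSemidef) (i : Fin m) :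
    (Tstep E M1 i σ).PosSemidef :=
  Matrix.posSemidef_sum _ fun _ _ => hσ.mul_mul_conjTranspose_same _

theorem Matrix.PosSemidef.Tword {σ : Matrix (Fin d) (Fin d) ℂ} (hσ : σ.PosSemidef)
    (f : List (Fin m)) : (Tword E M1 f σ).PosSemidef := by
  induction f generalizing σ with
  | nil => exact hσ
  | cons i f ih => exact ih (hσ.Tstep i)

theorem tAt_nonneg {σ : Matrix (Fin d) (Fin d) ℂ} (hσ : σ.PosSemidef) (f : List (Fin m)) :
    0 ≤ tAt E M0 M1 f σ :=
  ((hσ.Tword f).mul_mul_conjTranspose_same M0).re_trace_nonneg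

theorem trace_Tstep {i : Fin m} (hE : ∑ j, (E i j)ᴴ * E i j = 1) (σ : Matrix (Fin d) (Fin d) ℂ) :
    (Tstep E M1 i σ).trace = (M1ᴴ * M1 * σ).trace := by
  calc (Tstep E M1 i σ).trace = ∑ j, ((E i j * M1)ᴴ * (E i j * M1) * σ).trace := by
        simp only [Tstep, trace_sum, trace_mul_cycle _ σ]
    _ = (M1ᴴ * (∑ j, (E i j)ᴴ * E i j) * M1 * σ).trace := by
        simp only [← trace_sum, mul_sum, sum_mul, conjTranspose_mul, Matrix.mul_assoc]
    _ = (M1ᴴ * M1 * σ).trace := by rw [hE, mul_one]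

theorem trace_conj_add_trace_Tstep (hE : ∀ i, ∑ j, (E i j)ᴴ * E i j = 1)
    (hM : M0ᴴ * M0 + M1ᴴ * M1 = 1) (i : Fin m) (σ : Matrix (Fin d) (Fin d) ℂ) :
    (M0 * σ * M0ᴴ).trace + (Tstep E M1 i σ).trace = σ.trace := by
  rw [trace_Tstep (hE i), trace_mul_cycle, ← trace_add, ← add_mul, hM, one_mul]

theorem sum_tAt_add_re_trace_Tword (hE : ∀ i, ∑ j, (E i j)ᴴ * E i j = 1)
    (hM : M0ᴴ * M0 + M1ᴴ * M1 = 1) (s : ℕ → Fin m) (σ : Matrix (Fin d) (Fin d) ℂ) (N : ℕ) :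
    ∑ n ∈ range N, tAt E M0 M1 (prefixn s n) σ + (Tword E M1 (prefixn s N) σ).trace.re =
      σ.trace.re := by
  induction N with
  | zero => simp [prefixn, Tword]
  | succ N ih =>
    rw [sum_range_succ, Tword_prefixn_succ, add_assoc, ← ih, tAt, ← Complex.add_re,
      trace_conj_add_trace_Tstep hE hM]

theorem summable_tAt (hE : ∀ i, ∑ j, (E i j)ᴴ * E i j = 1) (hM : M0ᴴ * M0 + M1ᴴ * M1 = 1)
    {σ : Matrix (Fin d) (Fin d) ℂ} (hσ : σ.PosSemidef) (s : ℕ → Fin m) :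
    Summable fun n => tAt E M0 M1 (prefixn s n) σ :=
  summable_of_sum_range_le (fun n => tAt_nonneg hσ _) fun N => by
    linarith [sum_tAt_add_re_trace_Tword hE hM s σ N,
      (hσ.Tword (E := E) (M1 := M1) (prefixn s N)).re_trace_nonneg]

theorem tWord_prefixn (s : ℕ → Fin m) (σ : Matrix (Fin d) (Fin d) ℂ) (N : ℕ) :
    tWord E M0 M1 (prefixn s N) σ = ∑ n ∈ range (N + 1), tAt E M0 M1 (prefixn s n) σ := by
  simp only [tWord, tAt, length_prefixn]
  exact sum_congr rfl fun n hn => by rw [prefixn_take s (Nat.lt_succ_iff.mp (mem_range.mp hn))]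

theorem tWord_prefixn_le_tSched (hE : ∀ i, ∑ j, (E i j)ᴴ * E i j = 1)
    (hM : M0ᴴ * M0 + M1ᴴ * M1 = 1) {σ : Matrix (Fin d) (Fin d) ℂ} (hσ : σ.PosSemidef)
    (s : ℕ → Fin m) (N : ℕ) : tWord E M0 M1 (prefixn s N) σ ≤ tSched E M0 M1 s σ := by
  rw [tWord_prefixn]
  exact (summable_tAt hE hM hσ s).sum_le_tsum _ fun n _ => tAt_nonneg hσ _

theorem exists_lt_tWord_prefixn_of_lt_tSched (hE : ∀ i, ∑ j, (E i j)ᴴ * E i j = 1)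
    (hM : M0ᴴ * M0 + M1ᴴ * M1 = 1) {σ : Matrix (Fin d) (Fin d) ℂ} (hσ : σ.PosSemidef)
    {s : ℕ → Fin m} {y : ℝ} (hy : y < tSched E M0 M1 s σ) :
    ∃ N, y < tWord E M0 M1 (prefixn s N) σ := by
  have hlim := (summable_tAt hE hM hσ s).hasSum.tendsto_sum_nat.comp (tendsto_add_atTop_nat 1)
  obtain ⟨N, hN⟩ := (hlim.eventually (lt_mem_nhds hy)).exists
  exact ⟨N, (tWord_prefixn s σ N).symm ▸ hN⟩

theorem continuous_Tword (f : List (Fin m)) : Continuous (Tword E M1 f) := by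
  induction f with
  | nil => exact continuous_id
  | cons i f ih =>
    exact ih.comp (continuous_finsetSum _ fun j _ =>
      (continuous_const.matrix_mul continuous_id).matrix_mul continuous_const)

theorem continuous_tWord (f : List (Fin m)) : Continuous (tWord E M0 M1 f) :=
  continuous_finsetSum _ fun _ _ => Complex.continuous_re.comp
    ((continuous_const.matrix_mul (continuous_Tword _)).matrix_mul continuous_const).matrix_trace

theorem continuous_tWord_prefixn (N : ℕ) :
    Continuous fun p : Matrix (Fin d) (Fin d) ℂ × (ℕ → Fin m) =>
      tWord E M0 M1 (prefixn p.2 N) p.1 := by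
  have hdiscrete : Continuous fun q : Matrix (Fin d) (Fin d) ℂ × (Fin N → Fin m) =>
      tWord E M0 M1 (List.ofFn q.2) q.1 :=
    continuous_prod_of_discrete_right.2 fun v => continuous_tWord (List.ofFn v)
  have hrestrict : Continuous fun s : ℕ → Fin m => fun i : Fin N => s i :=
    continuous_pi fun i => continuous_apply (i : ℕ)
  exact (hdiscrete.comp (continuous_fst.prodMk (hrestrict.comp continuous_snd)) :)

theorem lowerSemicontinuousOn_tSched (hE : ∀ i, ∑ j, (E i j)ᴴ * E i j = 1)
    (hM : M0ᴴ * M0 + M1ᴴ * M1 = 1) :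
    LowerSemicontinuousOn (fun p : Matrix (Fin d) (Fin d) ℂ × (ℕ → Fin m) =>
      tSched E M0 M1 p.2 p.1) {p | p.1.PosSemidef} := by
  intro p hp y hy
  obtain ⟨N, hN⟩ := exists_lt_tWord_prefixn_of_lt_tSched hE hM hp hy
  filter_upwards [nhdsWithin_le_nhds ((continuous_tWord_prefixn N).continuousAt.eventually
    (lt_mem_nhds hN)), self_mem_nhdsWithin] with q hq hqσ
  exact hq.trans_le (tWord_prefixn_le_tSched hE hM hqσ _ _)

end Schedules

theorem supp_le_HR (E : Fin m → Fin r → Matrix (Fin d) (Fin d) ℂ)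
    (M1 ρ : Matrix (Fin d) (Fin d) ℂ) : supp ρ ≤ HR E M1 ρ :=
  le_iSup (fun f => supp (Tword E M1 f ρ)) []

theorem exists_tSched_lt_of_hProb_lt [Nonempty (Fin m)]
    {E : Fin m → Fin r → Matrix (Fin d) (Fin d) ℂ} {M0 M1 ρ : Matrix (Fin d) (Fin d) ℂ}
    (hne : (densityMatricesSupportedIn (HR E M1 ρ)).Nonempty) {ε : ℝ}
    (hε : hProb E M0 M1 ρ < ε) :
    ∃ σ ∈ densityMatricesSupportedIn (HR E M1 ρ), ∃ s, tSched E M0 M1 s σ < ε := by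
  obtain ⟨σ₀, hσ₀⟩ := hne
  unfold hProb at hε
  obtain ⟨_, ⟨σ, hσ, htr, hsupp, rfl⟩, hlt⟩ :=
    exists_lt_of_csInf_lt (by exact ⟨_, σ₀, hσ₀.1, hσ₀.2.1, hσ₀.2.2, rfl⟩) hε
  exact ⟨σ, ⟨hσ, htr, hsupp⟩, exists_lt_of_ciInf_lt hlt⟩

theorem exists_diverging_state_of_hProb_zero_general (d m r : ℕ) (hm : 0 < m)
    (E : Fin m → Fin r → Matrix (Fin d) (Fin d) ℂ)
    (hE : ∀ i, ∑ j, (E i j)ᴴ * E i j = 1)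
    (M0 M1 : Matrix (Fin d) (Fin d) ℂ)
    (hM : M0ᴴ * M0 + M1ᴴ * M1 = 1)
    (ρ : Matrix (Fin d) (Fin d) ℂ) (hρ : ρ.PosSemidef) (htr : ρ.trace = 1)
    (h0 : hProb E M0 M1 ρ = 0) :
    ∃ σ : Matrix (Fin d) (Fin d) ℂ, σ.PosSemidef ∧ σ.trace = 1 ∧
      supp σ ≤ HR E M1 ρ ∧ ∃ s : ℕ → Fin m, tSched E M0 M1 s σ = 0 := by
  have : Nonempty (Fin m) := ⟨⟨0, hm⟩⟩
  set K := densityMatricesSupportedIn (HR E M1 ρ)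
  have hρK : ρ ∈ K := ⟨hρ, htr, supp_le_HR E M1 ρ⟩
  obtain ⟨⟨σ, s⟩, ⟨hσK, -⟩, hmin⟩ := LowerSemicontinuousOn.exists_isMinOn
    (s := K ×ˢ Set.univ) ⟨(ρ, fun _ => ⟨0, hm⟩), hρK, trivial⟩
    ((isCompact_densityMatricesSupportedIn _).prod isCompact_univ)
    ((lowerSemicontinuousOn_tSched hE hM).mono fun p hp => hp.1.1)
  refine ⟨σ, hσK.1, hσK.2.1, hσK.2.2, s, le_antisymm ?_ (tsum_nonneg fun n => tAt_nonneg hσK.1 _)⟩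
  refine le_of_forall_pos_lt_add fun ε hε => ?_
  obtain ⟨σ', hσ', s', hs'⟩ := exists_tSched_lt_of_hProb_lt ⟨ρ, hρK⟩ (h0 ▸ hε)
  rw [zero_add]
  exact (hmin (show (σ', s') ∈ K ×ˢ Set.univ from ⟨hσ', trivial⟩)).trans_lt hs'

/-- if `h(ρ) = 0` then some state in the reachable space diverges with
probability one along some schedule. -/
theorem exists_diverging_state_of_hProb_zero (d m r : ℕ) (hd : 0 < d) (hm : 0 < m)
    (E : Fin m → Fin r → Matrix (Fin d) (Fin d) ℂ)
    (hE : ∀ i, ∑ j, (E i j)ᴴ * E i j = 1)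
    (M0 M1 : Matrix (Fin d) (Fin d) ℂ)
    (hM : M0ᴴ * M0 + M1ᴴ * M1 = 1)
    (ρ : Matrix (Fin d) (Fin d) ℂ) (hρ : ρ.PosSemidef) (htr : ρ.trace = 1)
    (h0 : hProb E M0 M1 ρ = 0) :
    ∃ σ : Matrix (Fin d) (Fin d) ℂ, σ.PosSemidef ∧ σ.trace = 1 ∧
      supp σ ≤ HR E M1 ρ ∧ ∃ s : ℕ → Fin m, tSched E M0 M1 s σ = 0 :=
  exists_diverging_state_of_hProb_zero_general d m r hm E hE M0 M1 hM ρ hρ htr h0
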